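/- Let 0<s<1, p>2 and ω ∈ ℝ. Suppose u : ℝ² → ℝ is measurable, u > 0 almost everywhere, u ∈ L¹(ℝ²) and u^{p−1} ∈ L¹(ℝ²), u has a representative that is axially symmetric and bell-shaped in each variable (for each fixed y the map x ↦ u(x,y) is even and nonincreasing in |x|, and for each fixed x the map y ↦ u(x,y) is even and nonincreasing in |y|), and u solves the profile equation in the distributional sense: ∫_{ℝ²} u(z) · F⁻¹[m_{s,ω}·ĥ](z) dz = ∫_{ℝ²} u(z)^{p−1} h(z) dz for every Schwartz function h, where F⁻¹[m_{s,ω}·ĥ] denotes the bounded continuous function whose Fourier transform is the integrable function m_{s,ω}·ĥ. Then ω > 0. -/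

import Mathlib

noncomputable section

open MeasureTheory Complex SchwartzMap Set
open scoped Real ComplexConjugate ENNReal

/-- The Fourier integral of a complex-valued function on `ℝ² = ℝ × ℝ`:
`û(ξ) = ∫ u(z) e^{-2πi z·ξ} dz`. -/
def FTc (u : ℝ × ℝ → ℂ) (ξ : ℝ × ℝ) : ℂ :=
  ∫ z : ℝ × ℝ, Complex.exp (Complex.I * ((-2 * Real.pi * (z.1 * ξ.1 + z.2 * ξ.2) : ℝ) : ℂ)) * u z

/-- The inverse Fourier integral `∫ g(ξ) e^{2πi z·ξ} dξ`. -/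
def IFTc (g : ℝ × ℝ → ℂ) (z : ℝ × ℝ) : ℂ :=
  ∫ ξ : ℝ × ℝ, Complex.exp (Complex.I * ((2 * Real.pi * (z.1 * ξ.1 + z.2 * ξ.2) : ℝ) : ℂ)) * g ξ

/-- `w` is the Fourier transform of `u ∈ L²(ℝ²)` in the Plancherel/distributional sense:
`w ∈ L²` and `∫ w h = ∫ u ĥ` for every Schwartz function `h`. -/
def HasFourier (u w : ℝ × ℝ → ℂ) : Prop :=
  MemLp w 2 (volume : Measure (ℝ × ℝ)) ∧
    ∀ h : SchwartzMap (ℝ × ℝ) ℂ,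
      ∫ ξ : ℝ × ℝ, w ξ * h ξ = ∫ z : ℝ × ℝ, u z * FTc (fun x => h x) z

/-- The Fourier transform of a real-valued function. -/
def HasFourierR (u : ℝ × ℝ → ℝ) (w : ℝ × ℝ → ℂ) : Prop :=
  HasFourier (fun z => (u z : ℂ)) w

/-- The anisotropic symbol `m_{s,ω}(ξ) = 4π²ξ₁² + (2π|ξ₂|)^{2s} + ω`. -/
def symb (s ω : ℝ) (ξ : ℝ × ℝ) : ℝ :=
  4 * Real.pi ^ 2 * ξ.1 ^ 2 + (2 * Real.pi * |ξ.2|) ^ (2 * s) + ω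

/-- `u ∈ H^{1,s}(ℝ²)`, with designated Fourier transform `w`. -/
def InH1s (s : ℝ) (u : ℝ × ℝ → ℝ) (w : ℝ × ℝ → ℂ) : Prop :=
  MemLp u 2 (volume : Measure (ℝ × ℝ)) ∧ HasFourierR u w ∧
    Integrable (fun ξ : ℝ × ℝ => symb s 1 ξ * ‖w ξ‖ ^ 2) (volume : Measure (ℝ × ℝ))

/-- `u ∈ H^{1,s}(ℝ²;ℂ)`, with designated Fourier transform `w`. -/
def InH1sC (s : ℝ) (u : ℝ × ℝ → ℂ) (w : ℝ × ℝ → ℂ) : Prop :=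
  MemLp u 2 (volume : Measure (ℝ × ℝ)) ∧ HasFourier u w ∧
    Integrable (fun ξ : ℝ × ℝ => symb s 1 ξ * ‖w ξ‖ ^ 2) (volume : Measure (ℝ × ℝ))

/-- `u` is a (real-valued) weak solution of `-∂ₓₓ u + (-∂_yy)^s u + ω u = |u|^{p-2} u`. -/
def IsWeakSol (s ω p : ℝ) (u : ℝ × ℝ → ℝ) (w : ℝ × ℝ → ℂ) : Prop :=
  InH1s s u w ∧ MemLp u (ENNReal.ofReal p) (volume : Measure (ℝ × ℝ)) ∧
    ∀ h : SchwartzMap (ℝ × ℝ) ℝ,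
      ∫ ξ : ℝ × ℝ, (symb s ω ξ : ℂ) * w ξ * conj (FTc (fun z => (h z : ℂ)) ξ)
        = ((∫ z : ℝ × ℝ, |u z| ^ (p - 2) * u z * h z : ℝ) : ℂ)

/-- The Weinstein functional `J[u]`. -/
def Jfun (s ω p : ℝ) (u : ℝ × ℝ → ℝ) (w : ℝ × ℝ → ℂ) : ℝ :=
  (∫ ξ : ℝ × ℝ, symb s ω ξ * ‖w ξ‖ ^ 2) / (∫ z : ℝ × ℝ, |u z| ^ p) ^ (2 / p)

/-- The Weinstein infimum `J_ω`. -/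
def Jinf (s ω p : ℝ) : ℝ :=
  sInf {j : ℝ | ∃ u w, InH1s s u w ∧
    ¬ (u =ᵐ[(volume : Measure (ℝ × ℝ))] fun _ => (0 : ℝ)) ∧ j = Jfun s ω p u w}

/-- Axially symmetric and bell-shaped in each variable. -/
def BellShaped (v : ℝ × ℝ → ℝ) : Prop :=
  (∀ x y, v (-x, y) = v (x, y)) ∧ (∀ x y, v (x, -y) = v (x, y)) ∧
    (∀ y x₁ x₂, 0 ≤ x₁ → x₁ ≤ x₂ → v (x₂, y) ≤ v (x₁, y)) ∧
    (∀ x y₁ y₂, 0 ≤ y₁ → y₁ ≤ y₂ → v (x, y₂) ≤ v (x, y₁))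

/-- The action functional `S_ω`. -/
def SAction (s ω p : ℝ) (u : ℝ × ℝ → ℝ) (w : ℝ × ℝ → ℂ) : ℝ :=
  (1 / 2) * ∫ ξ : ℝ × ℝ, symb s ω ξ * ‖w ξ‖ ^ 2
    - (1 / p) * ∫ z : ℝ × ℝ, |u z| ^ p

/-- Ground state: a nonzero weak solution minimizing the action among nonzero weak solutions. -/
def IsGroundState (s ω p : ℝ) (u : ℝ × ℝ → ℝ) (w : ℝ × ℝ → ℂ) : Prop :=
  IsWeakSol s ω p u w ∧ ¬ (u =ᵐ[(volume : Measure (ℝ × ℝ))] fun _ => (0 : ℝ)) ∧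
    ∀ v wv, IsWeakSol s ω p v wv →
      ¬ (v =ᵐ[(volume : Measure (ℝ × ℝ))] fun _ => (0 : ℝ)) →
        SAction s ω p u w ≤ SAction s ω p v wv

/-- `g = x·∂ₓu` in the distributional sense. -/
def IsXdxU (u g : ℝ × ℝ → ℝ) : Prop :=
  ∀ h : SchwartzMap (ℝ × ℝ) ℝ,
    ∫ z : ℝ × ℝ, g z * h z
      = -∫ z : ℝ × ℝ, u z * (h z + z.1 * fderiv ℝ (fun x => h x) z (1, 0))

/-- `g = y·∂_yu` in the distributional sense. -/
def IsYdyU (u g : ℝ × ℝ → ℝ) : Prop :=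
  ∀ h : SchwartzMap (ℝ × ℝ) ℝ,
    ∫ z : ℝ × ℝ, g z * h z
      = -∫ z : ℝ × ℝ, u z * (h z + z.2 * fderiv ℝ (fun x => h x) z (0, 1))

/-- `g = ∂ₓu` in the distributional sense. -/
def IsPartialX (u g : ℝ × ℝ → ℝ) : Prop :=
  ∀ h : SchwartzMap (ℝ × ℝ) ℝ,
    ∫ z : ℝ × ℝ, g z * h z = -∫ z : ℝ × ℝ, u z * fderiv ℝ (fun x => h x) z (1, 0)

/-- `g = ∂_yu` in the distributional sense. -/
def IsPartialY (u g : ℝ × ℝ → ℝ) : Prop :=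
  ∀ h : SchwartzMap (ℝ × ℝ) ℝ,
    ∫ z : ℝ × ℝ, g z * h z = -∫ z : ℝ × ℝ, u z * fderiv ℝ (fun x => h x) z (0, 1)

/-- `T₁ = ‖∂ₓu‖_{L²}² = ∫ 4π²ξ₁²|û(ξ)|² dξ`. -/
def KEx (w : ℝ × ℝ → ℂ) : ℝ := ∫ ξ : ℝ × ℝ, 4 * Real.pi ^ 2 * ξ.1 ^ 2 * ‖w ξ‖ ^ 2

/-- `T₂ = ‖D_y^s u‖_{L²}² = ∫ (2π|ξ₂|)^{2s}|û(ξ)|² dξ`. -/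
def KEy (s : ℝ) (w : ℝ × ℝ → ℂ) : ℝ :=
  ∫ ξ : ℝ × ℝ, (2 * Real.pi * |ξ.2|) ^ (2 * s) * ‖w ξ‖ ^ 2

/-- `M = ∫ |u|²`. -/
def Mass (u : ℝ × ℝ → ℝ) : ℝ := ∫ z : ℝ × ℝ, (u z) ^ 2

/-- `V = ∫ |u|^p`. -/
def Vint (p : ℝ) (u : ℝ × ℝ → ℝ) : ℝ := ∫ z : ℝ × ℝ, |u z| ^ p

/-- The anisotropic heat kernel
`H(x,y,t) = ∫ e^{-2πi(xξ₁+yξ₂)} e^{-t(ξ₁² + |ξ₂|^{2s})} dξ`. -/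
def Hker (s t : ℝ) (z : ℝ × ℝ) : ℂ :=
  ∫ ξ : ℝ × ℝ, Complex.exp (Complex.I * ((-2 * Real.pi * (z.1 * ξ.1 + z.2 * ξ.2) : ℝ) : ℂ))
    * Complex.exp (-((t * (ξ.1 ^ 2 + |ξ.2| ^ (2 * s)) : ℝ) : ℂ))

/-- The anisotropic Green's function `K(x,y) = ∫₀^∞ e^{-t} H(x,y,t) dt`. -/
def Kker (s : ℝ) (z : ℝ × ℝ) : ℂ :=
  ∫ t in Set.Ioi (0 : ℝ), Real.exp (-t) • Hker s t z

open Filter Topology FourierTransform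
open scoped RealInnerProductSpace

/-! Test the equation against the dilations `φ(ε·)` of a bump with `φ(0) = 1`. By Fubini and a
change of variables the left side is `∫ m_{s,ω}(εη) φ̂(η) ǔ(εη) dη`, where `ǔ = F⁻¹u` is bounded
and continuous since `u ∈ L¹`; as `ε → 0` this tends to `ω ǔ(0) ∫ φ̂ = ω ∫ u`, because
`m_{s,ω}(0) = ω` and `m_{s,ω}` grows at most quadratically. The right side tends to `∫ u^{p-1}`.
Hence `ω ∫ u = ∫ u^{p-1}`, and both integrals are positive. -/

lemma Real.rpow_le_one_add_sq {t a : ℝ} (ht : 0 ≤ t) (ha0 : 0 ≤ a) (ha2 : a ≤ 2) :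
    t ^ a ≤ 1 + t ^ 2 := by
  rcases le_total t 1 with h | h
  · linarith [Real.rpow_le_one ht h ha0, sq_nonneg t]
  · have := Real.rpow_le_rpow_of_exponent_le h ha2
    norm_cast at this
    linarith

lemma MeasureTheory.integral_pos_of_ae_pos {α : Type*} [MeasurableSpace α] {μ : Measure α}
    [NeZero μ] {f : α → ℝ} (hf : Integrable f μ) (h : ∀ᵐ x ∂μ, 0 < f x) :
    0 < ∫ x, f x ∂μ := by
  have hnonneg : 0 ≤ᵐ[μ] f := h.mono fun _ hx => hx.le
  refine (integral_nonneg_of_ae hnonneg).lt_of_ne fun h0 => ?_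
  obtain ⟨x, hx, hx0⟩ := (h.and ((integral_eq_zero_iff_of_nonneg_ae hnonneg hf).1 h0.symm)).exists
  exact hx.ne' hx0

lemma SchwartzMap.integrable_add_mul_sq_norm_mul {D V : Type*} [NormedAddCommGroup D]
    [NormedSpace ℝ D] [MeasurableSpace D] [BorelSpace D] [SecondCountableTopology D]
    [NormedAddCommGroup V] [NormedSpace ℝ V] (μ : Measure D) [μ.HasTemperateGrowth]
    (f : 𝓢(D, V)) (a b : ℝ) : Integrable (fun x => (a + b * ‖x‖ ^ 2) * ‖f x‖) μ := by
  have := (f.integrable.norm.const_mul a).add ((f.integrable_pow_mul μ 2).const_mul b)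
  exact this.congr (Eventually.of_forall fun x => by simp only [Pi.add_apply]; ring)

def SchwartzMap.dilate {E F : Type*} [NormedAddCommGroup E] [NormedSpace ℝ E]
    [NormedAddCommGroup F] [NormedSpace ℝ F] (ε : ℝ) (hε : ε ≠ 0) (h : 𝓢(E, F)) : 𝓢(E, F) :=
  compCLMOfContinuousLinearEquiv ℝ (ContinuousLinearEquiv.smulLeft (R₁ := ℝ) (Units.mk0 ε hε)) h

@[simp]
lemma SchwartzMap.dilate_apply {E F : Type*} [NormedAddCommGroup E] [NormedSpace ℝ E]
    [NormedAddCommGroup F] [NormedSpace ℝ F] (ε : ℝ) (hε : ε ≠ 0) (h : 𝓢(E, F)) (x : E) :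
    h.dilate ε hε x = h (ε • x) :=
  rfl

lemma tendsto_integral_mul_comp_smul {E : Type*} [NormedAddCommGroup E] [NormedSpace ℝ E]
    [MeasurableSpace E] [BorelSpace E] [SecondCountableTopology E] {μ : Measure E}
    {f : E → ℝ} (hf : Integrable f μ) {φ : E → ℝ} (hφ : Continuous φ) {C : ℝ}
    (hφC : ∀ x, |φ x| ≤ C) :
    Tendsto (fun ε : ℝ => ∫ z, f z * φ (ε • z) ∂μ) (𝓝 0) (𝓝 (φ 0 * ∫ z, f z ∂μ)) := by
  rw [← integral_const_mul]
  refine tendsto_integral_filter_of_dominated_convergence (fun z => C * ‖f z‖)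
    (Eventually.of_forall fun ε => hf.aestronglyMeasurable.mul
      (hφ.comp (continuous_const_smul ε)).aestronglyMeasurable)
    (Eventually.of_forall fun ε => Eventually.of_forall fun z => ?_)
    (hf.norm.const_mul C) (Eventually.of_forall fun z => ?_)
  · rw [norm_mul, mul_comm, Real.norm_eq_abs (φ _)]
    exact mul_le_mul_of_nonneg_right (hφC _) (norm_nonneg _)
  · rw [mul_comm]
    have : Tendsto (fun ε : ℝ => ε • z) (𝓝 0) (𝓝 0) := by
      simpa using (tendsto_id (x := 𝓝 (0 : ℝ))).smul_const z
    exact tendsto_const_nhds.mul ((hφ.tendsto 0).comp this)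

/- `ℝ × ℝ` carries the sup norm and no inner product, so the Fourier analysis of Schwartz functions
is done on `EuclideanSpace ℝ (Fin 2)` and transported back along this measure-preserving linear
equivalence. -/
def prodEquivEuclidean : (ℝ × ℝ) ≃L[ℝ] EuclideanSpace ℝ (Fin 2) :=
  LinearEquiv.toContinuousLinearEquiv <|
    (LinearEquiv.finTwoArrow ℝ ℝ).symm.trans (WithLp.linearEquiv 2 ℝ (Fin 2 → ℝ)).symm

lemma inner_prodEquivEuclidean (z ξ : ℝ × ℝ) :
    ⟪prodEquivEuclidean z, prodEquivEuclidean ξ⟫ = z.1 * ξ.1 + z.2 * ξ.2 := by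
  simp [PiLp.inner_apply, Fin.sum_univ_two, prodEquivEuclidean, mul_comm]

lemma measurePreserving_prodEquivEuclidean :
    MeasurePreserving prodEquivEuclidean volume volume :=
  (EuclideanSpace.volume_preserving_symm_measurableEquiv_toLp (Fin 2)).symm.comp
    (volume_preserving_finTwoArrow ℝ).symm

def fourierSchwartz (h : 𝓢(ℝ × ℝ, ℝ)) : 𝓢(ℝ × ℝ, ℂ) :=
  compCLMOfContinuousLinearEquiv ℝ prodEquivEuclidean
    (𝓕 (compCLMOfContinuousLinearEquiv ℝ prodEquivEuclidean.symm
      (postcompCLM Complex.ofRealCLM h)))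

lemma fourierSchwartz_apply (h : 𝓢(ℝ × ℝ, ℝ)) (ξ : ℝ × ℝ) :
    fourierSchwartz h ξ = FTc (fun x => (h x : ℂ)) ξ := by
  rw [fourierSchwartz, compCLMOfContinuousLinearEquiv_apply, Function.comp_apply, fourier_coe,
    Real.fourier_eq', ← measurePreserving_prodEquivEuclidean.integral_comp
      prodEquivEuclidean.toHomeomorph.measurableEmbedding, FTc]
  congr 1 with z
  simp [inner_prodEquivEuclidean, mul_comm]

lemma integral_fourierSchwartz (h : 𝓢(ℝ × ℝ, ℝ)) :
    ∫ ξ, fourierSchwartz h ξ = h 0 := by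
  set g := compCLMOfContinuousLinearEquiv ℝ prodEquivEuclidean.symm
    (postcompCLM Complex.ofRealCLM h)
  have hinv : 𝓕⁻ (𝓕 g) 0 = g 0 := by rw [FourierPair.fourierInv_fourier_eq]
  rw [fourierInv_coe, Real.fourierInv_eq'] at hinv
  simp only [inner_zero_right, mul_zero, Complex.ofReal_zero, zero_mul, Complex.exp_zero,
    one_smul] at hinv
  rw [← measurePreserving_prodEquivEuclidean.integral_comp
    prodEquivEuclidean.toHomeomorph.measurableEmbedding] at hinv
  simpa [g, fourierSchwartz] using hinv

lemma continuous_symb {s : ℝ} (hs : 0 ≤ s) (ω : ℝ) : Continuous (symb s ω) := by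
  unfold symb
  fun_prop (disch := positivity)

lemma symb_zero {s : ℝ} (hs : 0 < s) (ω : ℝ) : symb s ω 0 = ω := by
  simp [symb, Real.zero_rpow (by positivity : 2 * s ≠ 0)]

lemma abs_symb_le {s : ℝ} (hs0 : 0 ≤ s) (hs1 : s ≤ 1) (ω : ℝ) (ξ : ℝ × ℝ) :
    |symb s ω ξ| ≤ 1 + |ω| + 8 * π ^ 2 * ‖ξ‖ ^ 2 := by
  have h1 : ξ.1 ^ 2 ≤ ‖ξ‖ ^ 2 := by
    simpa only [Real.norm_eq_abs, sq_abs] using pow_le_pow_left₀ (norm_nonneg _) (norm_fst_le ξ) 2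
  have h2 : |ξ.2| ^ 2 ≤ ‖ξ‖ ^ 2 := pow_le_pow_left₀ (abs_nonneg _) (norm_snd_le ξ) 2
  have hy := Real.rpow_le_one_add_sq (by positivity : 0 ≤ 2 * π * |ξ.2|)
    (by linarith : 0 ≤ 2 * s) (by linarith)
  have hy0 : 0 ≤ (2 * π * |ξ.2|) ^ (2 * s) := by positivity
  rw [symb, abs_le]
  constructor <;> nlinarith [abs_nonneg ω, neg_abs_le ω, le_abs_self ω, Real.pi_pos,
    mul_le_mul_of_nonneg_left h1 (by positivity : (0:ℝ) ≤ 4 * π ^ 2),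
    mul_le_mul_of_nonneg_left h2 (by positivity : (0:ℝ) ≤ 4 * π ^ 2), sq_nonneg ξ.1]

lemma abs_symb_smul_le {s : ℝ} (hs0 : 0 ≤ s) (hs1 : s ≤ 1) (ω : ℝ) {ε : ℝ} (hε : |ε| ≤ 1)
    (ξ : ℝ × ℝ) : |symb s ω (ε • ξ)| ≤ 1 + |ω| + 8 * π ^ 2 * ‖ξ‖ ^ 2 := by
  have : ‖ε • ξ‖ ≤ ‖ξ‖ := by
    rw [norm_smul, Real.norm_eq_abs]
    exact mul_le_of_le_one_left (norm_nonneg _) hε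
  refine (abs_symb_le hs0 hs1 ω _).trans ?_
  gcongr

lemma integrable_symb_mul {s : ℝ} (hs0 : 0 ≤ s) (hs1 : s ≤ 1) (ω : ℝ) (f : 𝓢(ℝ × ℝ, ℂ)) :
    Integrable (fun ξ => (symb s ω ξ : ℂ) * f ξ) := by
  have hcont := (Complex.continuous_ofReal.comp (continuous_symb hs0 ω)).mul f.continuous
  refine (f.integrable_add_mul_sq_norm_mul volume (1 + |ω|) (8 * π ^ 2)).mono'
    hcont.aestronglyMeasurable (Eventually.of_forall fun ξ => ?_)
  rw [norm_mul, Complex.norm_real, Real.norm_eq_abs]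
  gcongr
  exact abs_symb_le hs0 hs1 ω ξ

lemma norm_IFTc_le (f : ℝ × ℝ → ℂ) (ξ : ℝ × ℝ) : ‖IFTc f ξ‖ ≤ ∫ z, ‖f z‖ :=
  (norm_integral_le_integral_norm _).trans_eq <| by
    simp only [norm_mul, Complex.norm_exp_I_mul_ofReal, one_mul]

lemma IFTc_zero (f : ℝ × ℝ → ℂ) : IFTc f 0 = ∫ z, f z := by
  simp [IFTc]

lemma continuous_IFTc {f : ℝ × ℝ → ℂ} (hf : Integrable f) : Continuous (IFTc f) :=
  continuous_of_dominated (fun ξ => (by fun_prop : Continuous fun η : ℝ × ℝ =>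
      Complex.exp (Complex.I * ((2 * π * (ξ.1 * η.1 + ξ.2 * η.2) : ℝ) : ℂ)))
        |>.aestronglyMeasurable.mul hf.aestronglyMeasurable)
    (fun _ => Eventually.of_forall fun _ => by
      rw [norm_mul, Complex.norm_exp_I_mul_ofReal, one_mul])
    hf.norm (Eventually.of_forall fun _ => by fun_prop)

lemma integral_mul_IFTc_comm {f g : ℝ × ℝ → ℂ} (hf : Integrable f) (hg : Integrable g) :
    ∫ z, f z * IFTc g z = ∫ ξ, g ξ * IFTc f ξ := by
  set e : ℝ × ℝ → ℝ × ℝ → ℂ := fun z ξ =>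
    Complex.exp (Complex.I * ((2 * π * (z.1 * ξ.1 + z.2 * ξ.2) : ℝ) : ℂ))
  have he : Continuous fun q : (ℝ × ℝ) × (ℝ × ℝ) => e q.1 q.2 := by fun_prop
  have hF : Integrable (fun q : (ℝ × ℝ) × (ℝ × ℝ) => f q.1 * (e q.1 q.2 * g q.2))
      (volume.prod volume) :=
    (hf.mul_prod hg).norm.mono' (hf.aestronglyMeasurable.comp_fst.mul
      (he.aestronglyMeasurable.mul hg.aestronglyMeasurable.comp_snd))
      (Eventually.of_forall fun q => by
        simp only [e, norm_mul, Complex.norm_exp_I_mul_ofReal, one_mul, le_refl])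
  calc ∫ z, f z * IFTc g z = ∫ z, ∫ ξ, f z * (e z ξ * g ξ) := by
        simp only [IFTc, integral_const_mul, e]
    _ = ∫ ξ, ∫ z, f z * (e z ξ * g ξ) := integral_integral_swap hF
    _ = ∫ ξ, g ξ * IFTc f ξ := by
        simp only [IFTc, ← integral_const_mul, e]
        congr 1 with ξ
        congr 1 with z
        rw [mul_comm z.1, mul_comm z.2]
        ring

lemma FTc_comp_smul (f : ℝ × ℝ → ℂ) {ε : ℝ} (hε : 0 < ε) (ξ : ℝ × ℝ) :
    FTc (fun x => f (ε • x)) ξ = ((ε ^ 2)⁻¹ : ℝ) • FTc f (ε⁻¹ • ξ) := by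
  have h := Measure.integral_comp_smul_of_nonneg volume (fun x : ℝ × ℝ =>
    Complex.exp (Complex.I * ((-2 * π * (x.1 * (ε⁻¹ • ξ).1 + x.2 * (ε⁻¹ • ξ).2) : ℝ) : ℂ)) *
      f x) ε (hR := hε.le)
  rw [Module.finrank_prod, Module.finrank_self] at h
  rw [FTc, FTc, ← h]
  congr 1 with x
  congr 4
  simp only [Prod.smul_fst, Prod.smul_snd, smul_eq_mul]
  field_simp

lemma integral_mul_IFTc_symb_mul_FTc_dilate {s : ℝ} (hs0 : 0 ≤ s) (hs1 : s ≤ 1) (ω : ℝ)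
    {u : ℝ × ℝ → ℂ} (hu : Integrable u) (h : 𝓢(ℝ × ℝ, ℝ)) {ε : ℝ} (hε : 0 < ε) :
    ∫ z, u z * IFTc (fun ξ => (symb s ω ξ : ℂ) * FTc (fun x => (h.dilate ε hε.ne' x : ℂ)) ξ) z
      = ∫ η, (symb s ω (ε • η) : ℂ) * fourierSchwartz h η * IFTc u (ε • η) := by
  have hg := integrable_symb_mul hs0 hs1 ω (fourierSchwartz (h.dilate ε hε.ne'))
  simp only [fourierSchwartz_apply] at hg
  have hcov := Measure.integral_comp_smul_of_nonneg volume (fun ξ : ℝ × ℝ =>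
    (symb s ω ξ : ℂ) * FTc (fun x => (h x : ℂ)) (ε⁻¹ • ξ) * IFTc u ξ) ε (hR := hε.le)
  simp only [Module.finrank_prod, Module.finrank_self, one_add_one_eq_two,
    inv_smul_smul₀ hε.ne'] at hcov
  simp only [fourierSchwartz_apply]
  rw [integral_mul_IFTc_comm hu hg, hcov, ← integral_smul]
  congr 1 with ξ
  simp only [SchwartzMap.dilate_apply]
  rw [FTc_comp_smul (fun x => (h x : ℂ)) hε, Complex.real_smul, Complex.real_smul]
  push_cast
  ring

lemma tendsto_integral_symb_smul_mul {s : ℝ} (hs0 : 0 < s) (hs1 : s ≤ 1) (ω : ℝ)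
    (Φ : 𝓢(ℝ × ℝ, ℂ)) {G : ℝ × ℝ → ℂ} (hG : Continuous G) {C : ℝ} (hGC : ∀ ξ, ‖G ξ‖ ≤ C) :
    Tendsto (fun ε : ℝ => ∫ η, (symb s ω (ε • η) : ℂ) * Φ η * G (ε • η)) (𝓝 0)
      (𝓝 (ω * G 0 * ∫ η, Φ η)) := by
  have hsmul : ∀ η : ℝ × ℝ, Tendsto (fun ε : ℝ => ε • η) (𝓝 0) (𝓝 0) := fun η => by
    simpa using (tendsto_id (x := 𝓝 (0 : ℝ))).smul_const η
  have hsymb := continuous_symb hs0.le ω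
  have hsmall : ∀ᶠ ε : ℝ in 𝓝 0, |ε| ≤ 1 := by
    filter_upwards [(isOpen_lt continuous_abs continuous_const).mem_nhds
      (by simp : |(0 : ℝ)| < 1)] with ε hε using hε.le
  rw [← integral_const_mul]
  refine tendsto_integral_filter_of_dominated_convergence
    (fun η => C * ((1 + |ω| + 8 * π ^ 2 * ‖η‖ ^ 2) * ‖Φ η‖))
    (Eventually.of_forall fun ε => ?_) (hsmall.mono fun ε hε => Eventually.of_forall fun η => ?_)
    ((Φ.integrable_add_mul_sq_norm_mul volume _ _).const_mul C)
    (Eventually.of_forall fun η => ?_)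
  · exact ((Complex.continuous_ofReal.comp (hsymb.comp (continuous_const_smul ε))).mul
      Φ.continuous |>.mul (hG.comp (continuous_const_smul ε))).aestronglyMeasurable
  · rw [norm_mul, norm_mul, Complex.norm_real, Real.norm_eq_abs]
    have := abs_symb_smul_le hs0.le hs1 ω hε η
    calc |symb s ω (ε • η)| * ‖Φ η‖ * ‖G (ε • η)‖
        ≤ (1 + |ω| + 8 * π ^ 2 * ‖η‖ ^ 2) * ‖Φ η‖ * C := by gcongr; exact hGC _
      _ = C * ((1 + |ω| + 8 * π ^ 2 * ‖η‖ ^ 2) * ‖Φ η‖) := by ring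
  · have h1 := (Complex.continuous_ofReal.tendsto _).comp ((hsymb.tendsto 0).comp (hsmul η))
    have h2 := (hG.tendsto 0).comp (hsmul η)
    rw [symb_zero hs0] at h1
    convert (h1.mul_const (Φ η)).mul h2 using 2
    · rfl
    · ring

theorem statement_1_general (s ω p : ℝ) (hs0 : 0 < s) (hs1 : s < 1)
    (u : ℝ × ℝ → ℝ)
    (hpos : ∀ᵐ z : ℝ × ℝ ∂(volume : Measure (ℝ × ℝ)), 0 < u z)
    (hL1 : Integrable u (volume : Measure (ℝ × ℝ)))
    (hLp : Integrable (fun z : ℝ × ℝ => u z ^ (p - 1)) (volume : Measure (ℝ × ℝ)))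
    (heq : ∀ h : SchwartzMap (ℝ × ℝ) ℝ,
      ∫ z : ℝ × ℝ, (u z : ℂ) *
          IFTc (fun ξ => (symb s ω ξ : ℂ) * FTc (fun x => (h x : ℂ)) ξ) z
        = ((∫ z : ℝ × ℝ, u z ^ (p - 1) * h z : ℝ) : ℂ)) :
    0 < ω := by
  let b : ContDiffBump (0 : ℝ × ℝ) := default
  let φ : 𝓢(ℝ × ℝ, ℝ) := b.hasCompactSupport.toSchwartzMap b.contDiff
  have hφ0 : φ 0 = 1 := b.one_of_mem_closedBall (Metric.mem_closedBall_self b.rIn_pos.le)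
  have hφ1 : ∀ z, |φ z| ≤ 1 := fun z => (abs_of_nonneg b.nonneg).trans_le b.le_one
  have hu : Integrable (fun z => (u z : ℂ)) := hL1.ofReal
  have hlhs := (tendsto_integral_symb_smul_mul hs0 hs1.le ω (fourierSchwartz φ)
    (continuous_IFTc hu) (norm_IFTc_le _)).mono_left (nhdsWithin_le_nhds (s := Ioi 0))
  have hrhs := ((Complex.continuous_ofReal.tendsto _).comp
    (tendsto_integral_mul_comp_smul hLp φ.continuous hφ1)).mono_left
      (nhdsWithin_le_nhds (s := Ioi 0))
  have hsides : ∀ ε ∈ Ioi (0 : ℝ),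
      ∫ η, (symb s ω (ε • η) : ℂ) * fourierSchwartz φ η * IFTc (fun z => (u z : ℂ)) (ε • η)
        = ((∫ z, u z ^ (p - 1) * φ (ε • z) : ℝ) : ℂ) := fun ε hε => by
    rw [← integral_mul_IFTc_symb_mul_FTc_dilate hs0.le hs1.le ω hu φ hε, heq]
    rfl
  have hlim := tendsto_nhds_unique (hlhs.congr' (eventually_nhdsWithin_of_forall hsides)) hrhs
  rw [IFTc_zero, integral_fourierSchwartz, hφ0, integral_complex_ofReal] at hlim
  simp only [Complex.ofReal_one, mul_one, one_mul] at hlim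
  have hbalance : ω * ∫ z, u z = ∫ z, u z ^ (p - 1) := by exact_mod_cast hlim
  have hIp : 0 < ∫ z, u z ^ (p - 1) :=
    integral_pos_of_ae_pos hLp (hpos.mono fun z hz => Real.rpow_pos_of_pos hz _)
  exact pos_of_mul_pos_left (hbalance ▸ hIp) (integral_pos_of_ae_pos hL1 hpos).le

/-- Necessity of `ω > 0`, Proposition 1.2, first part. -/
theorem statement_1 (s ω p : ℝ) (hs0 : 0 < s) (hs1 : s < 1) (hp : 2 < p)
    (u : ℝ × ℝ → ℝ) (hmeas : Measurable u)
    (hpos : ∀ᵐ z : ℝ × ℝ ∂(volume : Measure (ℝ × ℝ)), 0 < u z)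
    (hL1 : Integrable u (volume : Measure (ℝ × ℝ)))
    (hLp : Integrable (fun z : ℝ × ℝ => u z ^ (p - 1)) (volume : Measure (ℝ × ℝ)))
    (hbell : ∃ v : ℝ × ℝ → ℝ, u =ᵐ[(volume : Measure (ℝ × ℝ))] v ∧ BellShaped v)
    (heq : ∀ h : SchwartzMap (ℝ × ℝ) ℝ,
      ∫ z : ℝ × ℝ, (u z : ℂ) *
          IFTc (fun ξ => (symb s ω ξ : ℂ) * FTc (fun x => (h x : ℂ)) ξ) z
        = ((∫ z : ℝ × ℝ, u z ^ (p - 1) * h z : ℝ) : ℂ)) :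
    0 < ω :=
  statement_1_general s ω p hs0 hs1 u hpos hL1 hLp heq
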